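/- arXiv:1501.04402 — 6 statements merged into one kernel-verified Lean document; each statement's English description precedes it below -/
import Mathlib

section
/- Let G be a bidirectional graph and let η(G) be the maximum k such that G has a subgraph whose minimum outbound degree is at least k (a k-core). Then C(G) ≤ 1 + η(G). -/
noncomputable section

/-- Closed out-neighborhood of `v` in the graph with vertex set `S` and edge relation `E`. -/
def Nbr {V : Type*} (E : V → V → Prop) (S : Set V) (v : V) : Set V :=
  {v} ∪ {u | u ∈ S ∧ E v u}

/-- A valid `ℓ`-coloring of the graph `(S, E)`: every color appears on every closed
out-neighborhood. -/
def ValidColoring {V : Type*} (E : V → V → Prop) (S : Set V) (ℓ : ℕ) (c : V → Fin ℓ) : Prop :=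
  ∀ v ∈ S, ∀ i : Fin ℓ, ∃ u ∈ Nbr E S v, u ∈ S ∧ c u = i

/-- `(S, E')` is a nonempty subgraph of the graph `E` (on vertex set the whole type). -/
def IsSubgraph {V : Type*} (E : V → V → Prop) (S : Set V) (E' : V → V → Prop) : Prop :=
  S.Nonempty ∧ ∀ u v, E' u v → E u v ∧ u ∈ S ∧ v ∈ S

/-- Some nonempty subgraph of `E` admits a valid `ℓ`-coloring. -/
def HasValid {V : Type*} (E : V → V → Prop) (ℓ : ℕ) : Prop :=
  ∃ (S : Set V) (E' : V → V → Prop) (c : V → Fin ℓ),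
    IsSubgraph E S E' ∧ ValidColoring E' S ℓ c

/-- The writing capacity of the directed graph `E`. -/
def Cap {V : Type*} (E : V → V → Prop) : ℕ := sSup {ℓ | HasValid E ℓ}

/-- Out-degree. -/
def outDeg {V : Type*} (E : V → V → Prop) (v : V) : ℕ := Set.ncard {u | E v u}

/-- Maximum out-degree. -/
def maxOutDeg {V : Type*} [Fintype V] (E : V → V → Prop) : ℕ :=
  Finset.univ.sup (outDeg E)

/-- Maximum in-degree. -/
def maxInDeg {V : Type*} [Fintype V] (E : V → V → Prop) : ℕ :=
  Finset.univ.sup (fun v => Set.ncard {u | E u v})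

/-- Out-degree of `v` inside the subgraph `(S, E')`. -/
def subOutDeg {V : Type*} (E' : V → V → Prop) (S : Set V) (v : V) : ℕ :=
  Set.ncard {u | u ∈ S ∧ E' v u}

/-- Minimum out-degree of the subgraph `(S, E')`. -/
def minOutDeg {V : Type*} (E' : V → V → Prop) (S : Set V) : ℕ :=
  sInf {d | ∃ v ∈ S, d = subOutDeg E' S v}

/-- The largest `k` such that `E` has a `k`-core (a nonempty subgraph of minimum
out-degree at least `k`). -/
def eta {V : Type*} (E : V → V → Prop) : ℕ :=
  sSup {k | ∃ (S : Set V) (E' : V → V → Prop),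
    IsSubgraph E S E' ∧ ∀ v ∈ S, k ≤ subOutDeg E' S v}

/-- Number of directed edges. -/
def edgeCount {V : Type*} (E : V → V → Prop) : ℕ :=
  Set.ncard {p : V × V | E p.1 p.2}

/-- `k`-core bound: `C(G) ≤ 1 + η(G)` for a bidirectional graph `G`. -/
theorem kcore_bound {V : Type*} [Fintype V] (E : V → V → Prop) (hsym : Symmetric E) :
    Cap E ≤ 1 + eta E := by
  apply csSup_le'
  rintro ℓ ⟨S, E', c, ⟨hSne, hsub⟩, hval⟩
  rcases Nat.eq_zero_or_pos ℓ with rfl | hℓ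
  · exact Nat.zero_le _
  -- it suffices to show ℓ - 1 ≤ eta E
  have key : ℓ - 1 ≤ eta E := by
    apply le_csSup
    · -- bounded above by Fintype.card V
      refine ⟨Fintype.card V, ?_⟩
      rintro k ⟨S', E'', ⟨⟨v, hv⟩, _⟩, hdeg⟩
      calc k ≤ subOutDeg E'' S' v := hdeg v hv
        _ ≤ (Set.univ : Set V).ncard :=
            Set.ncard_le_ncard (Set.subset_univ _) Set.finite_univ
        _ = Fintype.card V := by rw [Set.ncard_univ, Nat.card_eq_fintype_card]
  -- the same subgraph is an (ℓ-1)-core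
    refine ⟨S, E', ⟨hSne, hsub⟩, fun v hv => ?_⟩
    -- choose a witness of each color in the closed neighborhood
    choose f hf1 hf2 using hval v hv
    have hinj : Function.Injective f := by
      intro i j hij
      have h := (hf2 i).2
      rw [hij, (hf2 j).2] at h
      exact h.symm
    have h1 : ℓ ≤ (Nbr E' S v).ncard := by
      have hr : Set.range f ⊆ Nbr E' S v := by
        rintro u ⟨i, rfl⟩; exact hf1 i
      calc ℓ = (Set.range f).ncard := by
              rw [← Set.image_univ, Set.ncard_image_of_injective _ hinj,
                Set.ncard_univ, Nat.card_eq_fintype_card, Fintype.card_fin]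
        _ ≤ (Nbr E' S v).ncard :=
            Set.ncard_le_ncard hr (Set.toFinite _)
    have h2 : (Nbr E' S v).ncard ≤ 1 + subOutDeg E' S v := by
      have : Nbr E' S v = insert v {u | u ∈ S ∧ E' v u} := by
        rw [Nbr, Set.insert_eq]
      rw [this, subOutDeg]
      have := Set.ncard_insert_le v {u | u ∈ S ∧ E' v u}
      omega
    omega
  omega
end
end

section
/- If a simple undirected graph on n vertices has more than (1/2)·n²·(r−2)/(r−1) edges, then it contains a clique on r vertices (Turán's theorem, clique version). -/
noncomputable section

section TuranAux
open Finset SimpleGraph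

lemma turan_edge_count (n m : ℕ) (hm : 0 < m) :
    2 * #(turanGraph n m).edgeFinset =
      ∑ i ∈ range m, (#{w : Fin n | (w : ℕ) % m = i} : ℕ) *
        (n - #{w : Fin n | (w : ℕ) % m = i}) := by
  classical
  rw [← sum_degrees_eq_twice_card_edges]
  have hdeg : ∀ v : Fin n, (turanGraph n m).degree v
      = n - #({w : Fin n | (w : ℕ) % m = (v : ℕ) % m} : Finset (Fin n)) := by
    intro v
    rw [← card_neighborFinset_eq_degree, neighborFinset_eq_filter]
    have : (univ.filter fun w : Fin n => (turanGraph n m).Adj v w)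
        = univ \ (univ.filter fun w : Fin n => (w : ℕ) % m = (v : ℕ) % m) := by
      ext w
      simp [turanGraph, eq_comm]
      exact Finset.mem_filter.trans (and_iff_right (Finset.mem_univ _))
    rw [this, card_sdiff_of_subset (filter_subset _ _), card_univ, Fintype.card_fin]
  calc ∑ v, (turanGraph n m).degree v
      = ∑ v : Fin n, (n - #({w : Fin n | (w : ℕ) % m = (v : ℕ) % m} : Finset (Fin n))) :=
        Finset.sum_congr rfl fun v _ => hdeg v
    _ = ∑ i ∈ range m, ∑ v ∈ univ.filter (fun v : Fin n => (v : ℕ) % m = i),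
          (n - #({w : Fin n | (w : ℕ) % m = (v : ℕ) % m} : Finset (Fin n))) :=
        (Finset.sum_fiberwise_of_maps_to (fun v _ => mem_range.2 (Nat.mod_lt _ hm)) _).symm
    _ = ∑ i ∈ range m, (#{w : Fin n | (w : ℕ) % m = i} : ℕ) *
          (n - #{w : Fin n | (w : ℕ) % m = i}) := by
        refine Finset.sum_congr rfl fun i hi => ?_
        rw [Finset.sum_congr rfl (g := fun _ => n - #({w : Fin n | (w : ℕ) % m = i} : Finset (Fin n)))
          (fun v hv => by rw [(mem_filter.1 hv).2]), Finset.sum_const, smul_eq_mul]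

lemma turan_edge_bound (n m : ℕ) (hm : 0 < m) :
    2 * (m : ℝ) * (#(turanGraph n m).edgeFinset : ℝ) ≤ (n : ℝ) ^ 2 * ((m : ℝ) - 1) := by
  classical
  set c : ℕ → ℕ := fun i => #({w : Fin n | (w : ℕ) % m = i} : Finset (Fin n)) with hc
  have hsum : ∑ i ∈ range m, c i = n := by
    rw [← Fintype.card_fin n, ← Finset.card_univ,
      Finset.card_eq_sum_card_fiberwise (fun v (_ : v ∈ univ) => mem_range.2 (Nat.mod_lt _ hm))]
  have hle : ∀ i, c i ≤ n := fun i => by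
    simpa using (Finset.card_filter_le (univ : Finset (Fin n)) _).trans_eq (by simp)
  have hcount := turan_edge_count n m hm
  have hcast : (2 : ℝ) * (#(turanGraph n m).edgeFinset : ℝ)
      = (n : ℝ) ^ 2 - ∑ i ∈ range m, (c i : ℝ) ^ 2 := by
    have := congrArg (fun k : ℕ => (k : ℝ)) hcount
    push_cast [Nat.cast_sub (hle _)] at this
    have e2 : ∀ i, ((n - c i : ℕ) : ℝ) = (n : ℝ) - c i := fun i => Nat.cast_sub (hle i)
    change _ = ∑ i ∈ range m, (c i : ℝ) * ((n - c i : ℕ) : ℝ) at this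
    simp only [e2] at this
    rw [this]
    have : ∑ i ∈ range m, (c i : ℝ) * ((n : ℝ) - (c i : ℝ))
        = (n : ℝ) * ∑ i ∈ range m, (c i : ℝ) - ∑ i ∈ range m, (c i : ℝ) ^ 2 := by
      rw [Finset.mul_sum, ← Finset.sum_sub_distrib]
      exact Finset.sum_congr rfl fun i _ => by ring
    rw [this]
    have hn : (∑ i ∈ range m, (c i : ℝ)) = n := by exact_mod_cast congrArg (fun k : ℕ => (k : ℝ)) hsum
    rw [hn]; ring
  have hcs : (n : ℝ) ^ 2 ≤ (m : ℝ) * ∑ i ∈ range m, (c i : ℝ) ^ 2 := by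
    have := sq_sum_le_card_mul_sum_sq (s := range m) (f := fun i => (c i : ℝ))
    simpa [hsum, ← Nat.cast_sum] using this
  nlinarith [hcast, hcs]

end TuranAux

open Finset SimpleGraph in
/-- Turán's theorem (clique version): a simple graph on `n` vertices with more than
`(1/2) n² (r-2)/(r-1)` edges contains a clique on `r` vertices. -/
theorem turan_clique {V : Type*} [Fintype V] (G : SimpleGraph V) [DecidableRel G.Adj]
    (r : ℕ) (hr : 2 ≤ r)
    (h : (1 / 2 : ℝ) * (Fintype.card V) ^ 2 * ((r : ℝ) - 2) / ((r : ℝ) - 1)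
      < (G.edgeFinset.card : ℝ)) :
    ∃ s : Finset V, G.IsNClique r s := by
  classical
  by_contra hc
  push_neg at hc
  have hcf : G.CliqueFree r := fun s => hc s
  set n := Fintype.card V with hn
  obtain ⟨m, rfl⟩ : ∃ m, r = m + 1 := ⟨r - 1, by omega⟩
  have hm : 0 < m := by omega
  set e := Fintype.equivFin V with he
  set G' : SimpleGraph (Fin n) := G.map e.toEmbedding with hG'
  have iso : G ≃g G' := SimpleGraph.Iso.map e G
  have cf' : G'.CliqueFree (m + 1) := hcf.comap iso.symm.toEmbedding.isContained
  have hEeq : #G.edgeFinset = #G'.edgeFinset := iso.card_edgeFinset_eq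
  have hmax := (isTuranMaximal_turanGraph (n := n) hm).2 (G' := G') cf'
  have hbound := turan_edge_bound n m hm
  have hEG : (#G.edgeFinset : ℝ) ≤ (#(turanGraph n m).edgeFinset : ℝ) := by
    exact_mod_cast hEeq ▸ Nat.cast_le.2 hmax
  have hmpos : (0 : ℝ) < m := by exact_mod_cast hm
  have hcast : ((m + 1 : ℕ) : ℝ) - 2 = (m : ℝ) - 1 := by push_cast; ring
  have hcast2 : ((m + 1 : ℕ) : ℝ) - 1 = (m : ℝ) := by push_cast; ring
  rw [hcast, hcast2] at h
  have key : (1 / 2 : ℝ) * (n : ℝ) ^ 2 * ((m : ℝ) - 1) / (m : ℝ)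
      < (#(turanGraph n m).edgeFinset : ℝ) := lt_of_lt_of_le h hEG
  rw [div_lt_iff₀ hmpos] at key
  nlinarith [key, hbound]
end
end

section
/- Let (G_n) be a sequence of bidirectional graphs on n vertices with |E_n| = n²(1 − O(1/n)) directed edges. Then C(G_n) = Θ(n). -/
noncomputable section

open Finset Classical

lemma aux_hasValid_le {n : ℕ} {E : Fin n → Fin n → Prop} {ℓ : ℕ} (h : HasValid E ℓ) : ℓ ≤ n := by
  obtain ⟨S, E', c, ⟨⟨v, hv⟩, hsub⟩, hval⟩ := h
  have hu : ∀ i : Fin ℓ, ∃ u, u ∈ S ∧ c u = i := by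
    intro i; obtain ⟨u, _, hu2, hc⟩ := hval v hv i; exact ⟨u, hu2, hc⟩
  choose u hu1 hu2 using hu
  have hinj : Function.Injective u := fun i j hij => by
    rw [← hu2 i, ← hu2 j, hij]
  simpa using Fintype.card_le_of_injective u hinj

lemma aux_cap_le {n : ℕ} (E : Fin n → Fin n → Prop) : Cap E ≤ n :=
  csSup_le' (fun _ hℓ => aux_hasValid_le hℓ)

lemma aux_edgeCount_eq {n : ℕ} (E : Fin n → Fin n → Prop) :
    edgeCount E = ∑ v : Fin n, (univ.filter fun u => E v u).card := by
  classical
  have h1 : edgeCount E = (univ.filter fun p : Fin n × Fin n => E p.1 p.2).card := by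
    rw [edgeCount, Set.ncard_eq_toFinset_card']
    congr 1
    ext p
    simp
  rw [h1, Finset.card_eq_sum_card_fiberwise
      (f := Prod.fst) (t := univ) (fun x _ => mem_univ _)]
  refine Finset.sum_congr rfl fun v _ => ?_
  have : ((univ.filter fun p : Fin n × Fin n => E p.1 p.2).filter fun p => p.1 = v)
      = (univ.filter fun u => E v u).map
        ⟨fun u => (v, u), fun a b h => by simpa using congrArg Prod.snd h⟩ := by
    ext p
    simp only [Finset.mem_filter, Finset.mem_map, Finset.mem_univ, true_and,
      Function.Embedding.coeFn_mk]
    constructor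
    · rintro ⟨hE, h1⟩
      exact ⟨p.2, by subst h1; exact ⟨hE, Prod.mk.eta⟩⟩
    · rintro ⟨u, hu, rfl⟩
      exact ⟨hu, rfl⟩
  rw [this, Finset.card_map]

set_option maxHeartbeats 1000000 in
lemma aux_lower {n : ℕ} (E : Fin n → Fin n → Prop) (hirr : ∀ v, ¬ E v v)
    {C : ℝ} (hC : 0 < C) (hEc : (n : ℝ) ^ 2 * (1 - C / n) ≤ (edgeCount E : ℝ))
    (hn : 4 * (⌈2 * C⌉₊ + 2) ≤ n) :
    (n : ℝ) / (4 * (⌈2 * C⌉₊ + 2)) ≤ (Cap E : ℝ) := by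
  classical
  set K : ℕ := ⌈2 * C⌉₊ with hK
  set b : ℕ := K + 2 with hb
  have hbpos : 0 < b := by omega
  have hnpos : 0 < n := by omega
  -- complement degrees
  set D : Fin n → ℕ := fun v => (univ.filter fun u => u ≠ v ∧ ¬ E v u).card with hD
  -- degree decomposition
  have hdeg : ∀ v : Fin n, (univ.filter fun u => E v u).card + D v = n - 1 := by
    intro v
    have e1 : (univ.erase v).filter (fun u => E v u) = univ.filter fun u => E v u := by
      ext u
      simp only [Finset.mem_filter, Finset.mem_erase, Finset.mem_univ, true_and, and_true]
      constructor
      · rintro ⟨_, h⟩; exact h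
      · intro h; exact ⟨fun he => hirr v (he ▸ h), h⟩
    have e2 : (univ.erase v).filter (fun u => ¬ E v u)
        = univ.filter fun u => u ≠ v ∧ ¬ E v u := by
      ext u
      simp only [Finset.mem_filter, Finset.mem_erase, Finset.mem_univ, true_and, and_true]
    have := Finset.card_filter_add_card_filter_not
      (s := univ.erase v) (p := fun u => E v u)
    rw [e1, e2, Finset.card_erase_of_mem (mem_univ v), Finset.card_univ, Fintype.card_fin] at this
    exact this
  -- total count
  have htot : edgeCount E + ∑ v : Fin n, D v = n * (n - 1) := by
    rw [aux_edgeCount_eq, ← Finset.sum_add_distrib]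
    calc ∑ v : Fin n, ((univ.filter fun u => E v u).card + D v)
        = ∑ _v : Fin n, (n - 1) := Finset.sum_congr rfl (fun v _ => hdeg v)
      _ = n * (n - 1) := by simp [mul_comm]
  -- sum of complement degrees is at most C * n
  have hedge : (n : ℝ) ^ 2 - C * n ≤ (edgeCount E : ℝ) := by
    have : (n : ℝ) ^ 2 * (1 - C / n) = (n : ℝ) ^ 2 - C * n := by
      field_simp
    linarith [hEc, this.symm.le]
  have hsumD : (↑(∑ v : Fin n, D v) : ℝ) ≤ C * n := by
    have hcast : (edgeCount E : ℝ) + (↑(∑ v : Fin n, D v) : ℝ) = n * (n - 1) := by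
      have := congrArg (fun k : ℕ => (k : ℝ)) htot
      push_cast [Nat.cast_sub hnpos] at this
      push_cast
      linarith [this]
    have hnn : (n : ℝ) * ((n : ℝ) - 1) = (n : ℝ) ^ 2 - n := by ring
    have h0 : (0 : ℝ) ≤ (n : ℝ) := Nat.cast_nonneg n
    linarith
  -- the set of low-complement-degree vertices
  set S : Finset (Fin n) := univ.filter (fun v => D v ≤ K) with hS
  set m : ℕ := S.card with hm
  have hcompl : (↑(univ.filter fun v : Fin n => ¬ D v ≤ K).card : ℝ) ≤ (n : ℝ) / 2 := by
    set T := univ.filter fun v : Fin n => ¬ D v ≤ K with hT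
    have h1 : T.card * (K + 1) ≤ ∑ v : Fin n, D v := by
      calc T.card * (K + 1) = T.card • (K + 1) := by rw [smul_eq_mul]
        _ ≤ ∑ v ∈ T, D v := Finset.card_nsmul_le_sum T D (K + 1)
            (fun v hv => by simp [hT] at hv; omega)
        _ ≤ ∑ v : Fin n, D v := Finset.sum_le_sum_of_subset (Finset.filter_subset _ _)
    have h2 : (T.card : ℝ) * (2 * C) ≤ C * n := by
      have hKC : 2 * C ≤ (K : ℝ) + 1 := le_trans (Nat.le_ceil _) (by push_cast; linarith)
      have h1' : (T.card : ℝ) * ((K : ℝ) + 1) ≤ C * n := by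
        calc (T.card : ℝ) * ((K : ℝ) + 1) = ((T.card * (K + 1) : ℕ) : ℝ) := by push_cast; ring
          _ ≤ (↑(∑ v : Fin n, D v) : ℝ) := by exact_mod_cast h1
          _ ≤ C * n := hsumD
      nlinarith [T.card.cast_nonneg (α := ℝ)]
    nlinarith
  have hmn : (n : ℝ) / 2 ≤ (m : ℝ) := by
    have := Finset.card_filter_add_card_filter_not
      (s := (univ : Finset (Fin n))) (p := fun v => D v ≤ K)
    rw [Finset.card_univ, Fintype.card_fin] at this
    have hcast : (m : ℝ) + (↑(univ.filter fun v : Fin n => ¬ D v ≤ K).card : ℝ) = n := by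
      rw [hm, hS]; exact_mod_cast this
    linarith
  -- m ≥ 2b as naturals
  have hm2b : 2 * b ≤ m := by
    have : (2 * b : ℝ) ≤ (m : ℝ) := by
      have : (4 * b : ℝ) ≤ n := by exact_mod_cast hn
      linarith
    exact_mod_cast this
  set ℓ : ℕ := m / b with hℓ
  have hℓ2 : 2 ≤ ℓ := Nat.le_div_iff_mul_le hbpos |>.2 (by omega)
  have hℓb : ℓ * b ≤ m := by rw [hℓ]; exact Nat.div_mul_le_self m b
  have hmlt : m < (ℓ + 1) * b := by
    have h := Nat.div_add_mod m b
    have h2 := Nat.mod_lt m hbpos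
    have h3 : (ℓ + 1) * b = b * (m / b) + b := by rw [hℓ]; ring
    omega
  have hℓpos : 0 < ℓ := by omega
  -- build the valid coloring
  have hvalid : HasValid E ℓ := by
    set e := S.orderIsoOfFin (rfl : S.card = m) with he
    set c : Fin n → Fin ℓ := fun v =>
      if h : v ∈ S then
        ⟨min (((e.symm ⟨v, h⟩ : Fin m) : ℕ) / b) (ℓ - 1),
          lt_of_le_of_lt (min_le_right _ _) (Nat.sub_lt hℓpos one_pos)⟩
      else ⟨0, hℓpos⟩ with hc
    set S' : Set (Fin n) := ↑S with hS'
    set E' : Fin n → Fin n → Prop := fun a b => E a b ∧ a ∈ S' ∧ b ∈ S' with hE'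
    have hSne : S.Nonempty := Finset.card_pos.mp (by omega)
    refine ⟨S', E', c, ⟨⟨hSne.choose, by simpa [hS'] using hSne.choose_spec⟩,
      fun u v h => ⟨h.1, h.2.1, h.2.2⟩⟩, ?_⟩
    intro v hv i
    have hvS : v ∈ S := by simpa [hS'] using hv
    -- the color class of i inside S has at least b elements
    set A : Finset (Fin n) := S.filter (fun u => c u = i) with hA
    have hAcard : b ≤ A.card := by
      have hidx : ∀ t : Fin b, (t : ℕ) + b * (i : ℕ) < m := by
        intro t
        have hi : (i : ℕ) + 1 ≤ ℓ := i.2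
        calc (t : ℕ) + b * (i : ℕ) < b + b * (i : ℕ) := by omega
          _ = ((i : ℕ) + 1) * b := by ring
          _ ≤ ℓ * b := Nat.mul_le_mul_right b hi
          _ ≤ m := hℓb
      set f : Fin b → Fin n := fun t => ↑(e ⟨(t : ℕ) + b * (i : ℕ), hidx t⟩) with hf
      have hfmem : ∀ t, f t ∈ A := by
        intro t
        have hSmem : (f t : Fin n) ∈ S := (e ⟨(t : ℕ) + b * (i : ℕ), hidx t⟩).2
        refine Finset.mem_filter.mpr ⟨hSmem, ?_⟩
        have hsymm : e.symm ⟨f t, hSmem⟩ = ⟨(t : ℕ) + b * (i : ℕ), hidx t⟩ := by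
          have heq : (⟨f t, hSmem⟩ : {x // x ∈ S}) = e ⟨(t : ℕ) + b * (i : ℕ), hidx t⟩ :=
            Subtype.ext rfl
          rw [heq, e.symm_apply_apply]
        simp only [hc]
        rw [dif_pos hSmem]
        apply Fin.ext
        simp only [hsymm]
        have hdiv : ((t : ℕ) + b * (i : ℕ)) / b = (i : ℕ) :=
          by rw [Nat.add_mul_div_left _ _ hbpos, Nat.div_eq_of_lt t.2, zero_add]
        simp only [hdiv]
        have : (i : ℕ) ≤ ℓ - 1 := by omega
        omega
      have hfinj : Set.InjOn f ↑(univ : Finset (Fin b)) := by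
        intro t1 _ t2 _ hft
        have : ((t1 : ℕ) + b * (i : ℕ)) = ((t2 : ℕ) + b * (i : ℕ)) := by
          have := Subtype.coe_injective hft
          have := e.injective this
          simpa [Fin.ext_iff] using this
        exact Fin.ext (by omega)
      calc b = (univ : Finset (Fin b)).card := by simp
        _ ≤ A.card := Finset.card_le_card_of_injOn f (fun t _ => hfmem t) hfinj
    -- the bad set
    set Bad : Finset (Fin n) := univ.filter (fun u => u ≠ v ∧ ¬ E v u) with hBad
    have hBadcard : Bad.card ≤ K := by
      have : D v ≤ K := (Finset.mem_filter.mp hvS).2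
      exact this
    have : ¬ A ⊆ Bad := fun hsub => by
      have := Finset.card_le_card hsub
      omega
    obtain ⟨u, huA, huB⟩ := Finset.not_subset.mp this
    have huS : u ∈ S := (Finset.mem_filter.mp huA).1
    have huc : c u = i := (Finset.mem_filter.mp huA).2
    have : ¬ (u ≠ v ∧ ¬ E v u) := by
      intro hcon
      exact huB (Finset.mem_filter.mpr ⟨mem_univ u, hcon⟩)
    refine ⟨u, ?_, by simpa [hS'] using huS, huc⟩
    by_cases heq : u = v
    · left; simp [heq]
    · right
      have hEvu : E v u := by tauto
      exact ⟨by simpa [hS'] using huS, hEvu, by simpa [hS'] using hvS, by simpa [hS'] using huS⟩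
  -- conclude
  have hcap : ℓ ≤ Cap E := le_csSup ⟨n, fun ℓ' hℓ' => aux_hasValid_le hℓ'⟩ hvalid
  have hbR : (0 : ℝ) < (b : ℝ) := by exact_mod_cast hbpos
  have hn4b : (4 * b : ℝ) ≤ (n : ℝ) := by exact_mod_cast hn
  have h1 : (n : ℝ) / (4 * b) ≤ (ℓ : ℝ) := by
    have h4b : (0 : ℝ) < 4 * (b : ℝ) := by linarith
    rw [div_le_iff₀ h4b]
    have hmR : (m : ℝ) < ((ℓ : ℝ) + 1) * (b : ℝ) := by exact_mod_cast hmlt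
    nlinarith [hmn, hn4b]
  calc (n : ℝ) / (4 * (⌈2 * C⌉₊ + 2)) = (n : ℝ) / (4 * b) := by norm_cast
    _ ≤ (ℓ : ℝ) := h1
    _ ≤ (Cap E : ℝ) := by exact_mod_cast hcap


/-- For a sequence of bidirectional graphs with `|E_n| = n²(1 - O(1/n))` directed edges,
the writing capacity is `Θ(n)`. -/
theorem cap_extremely_dense_sequence (G : ∀ n : ℕ, Fin n → Fin n → Prop)
    (hsym : ∀ n, Symmetric (G n)) (hirr : ∀ n v, ¬ G n v v)
    (hE : ∃ C : ℝ, 0 < C ∧ ∃ N : ℕ, ∀ n ≥ N,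
      (n : ℝ) ^ 2 * (1 - C / n) ≤ (edgeCount (G n) : ℝ)) :
    ∃ c₁ c₂ : ℝ, 0 < c₁ ∧ 0 < c₂ ∧ ∃ N : ℕ, ∀ n ≥ N,
      c₁ * (n : ℝ) ≤ (Cap (G n) : ℝ) ∧ (Cap (G n) : ℝ) ≤ c₂ * (n : ℝ) := by
  obtain ⟨C, hC, N, hEN⟩ := hE
  set b : ℕ := ⌈2 * C⌉₊ + 2 with hb
  have hbR : (0 : ℝ) < 4 * (b : ℝ) := by positivity
  refine ⟨1 / (4 * b), 1, by positivity, one_pos, max N (4 * b), fun n hn => ?_⟩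
  have hnN : N ≤ n := le_trans (le_max_left _ _) hn
  have hn4b : 4 * (⌈2 * C⌉₊ + 2) ≤ n := le_trans (le_max_right _ _) hn
  constructor
  · have := aux_lower (G n) (hirr n) hC (hEN n hnN) hn4b
    calc (1 / (4 * (b : ℝ))) * n = (n : ℝ) / (4 * (⌈2 * C⌉₊ + 2)) := by
          rw [hb]; push_cast; ring
      _ ≤ (Cap (G n) : ℝ) := this
  · have := aux_cap_le (G n)
    have : (Cap (G n) : ℝ) ≤ n := by exact_mod_cast this
    linarith
end
end

section
/- The 3-dimensional hypercube graph Q_3 (vertices are binary 3-tuples, edges between tuples differing in one coordinate, taken bidirectionally) has writing capacity C(Q_3) = 4. -/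
noncomputable section

abbrev EQ3 := fun u v : Fin 3 → Bool => Set.ncard {i | u i ≠ v i} = 1

def E3 (u v : Fin 3 → Bool) : Prop := (Finset.univ.filter (fun i => u i ≠ v i)).card = 1

instance : DecidableRel E3 := fun _ _ => by unfold E3; infer_instance

lemma EQ3_iff (u v : Fin 3 → Bool) : EQ3 u v ↔ E3 u v := by
  unfold EQ3 E3
  rw [Set.ncard_eq_toFinset_card']
  simp [Set.toFinset_setOf]

def col (u : Fin 3 → Bool) : Fin 4 :=
  ⟨(if u 1 ≠ u 0 then 2 else 0) + (if u 2 ≠ u 0 then 1 else 0), by split <;> split <;> simp⟩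

lemma valid4 : ValidColoring E3 Set.univ 4 col := by
  simp only [ValidColoring, Nbr, Set.mem_univ, Set.mem_union, Set.mem_singleton_iff,
    Set.mem_setOf_eq, true_and, and_true]
  decide

lemma deg3 (v : Fin 3 → Bool) : Set.ncard {u | EQ3 v u} ≤ 3 := by
  have : {u | EQ3 v u} = {u | E3 v u} := by ext u; exact EQ3_iff v u
  rw [this, Set.ncard_eq_toFinset_card']
  have : ∀ w : Fin 3 → Bool, ({u | E3 w u}.toFinset).card = 3 := by
    simp only [Set.toFinset_setOf]; decide
  rw [this]

lemma hasValid4 : HasValid EQ3 4 := by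
  refine ⟨Set.univ, E3, col,
    ⟨⟨fun _ => false, trivial⟩, fun u v h => ⟨(EQ3_iff u v).2 h, trivial, trivial⟩⟩, valid4⟩

lemma upper {ℓ : ℕ} (h : HasValid EQ3 ℓ) : ℓ ≤ 4 := by
  obtain ⟨S, E', c, ⟨⟨v, hv⟩, hsub⟩, hval⟩ := h
  choose f hf1 _ hf3 using hval v hv
  have hinj : Function.Injective f := by
    intro i j hij
    rw [← hf3 i, ← hf3 j, hij]
  have hsubN : Nbr E' S v ⊆ {v} ∪ {u | EQ3 v u} := by
    rintro u (hu | ⟨hu1, hu2⟩)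
    · exact Or.inl hu
    · exact Or.inr (hsub v u hu2).1
  have hN : Set.ncard ({v} ∪ {u | EQ3 v u} : Set (Fin 3 → Bool)) ≤ 4 := by
    calc Set.ncard ({v} ∪ {u | EQ3 v u} : Set (Fin 3 → Bool))
        ≤ Set.ncard ({v} : Set (Fin 3 → Bool)) + Set.ncard {u | EQ3 v u} :=
          Set.ncard_union_le _ _
      _ ≤ 1 + 3 := add_le_add (le_of_eq (Set.ncard_singleton v)) (deg3 v)
      _ = 4 := rfl
  calc ℓ = Fintype.card (Fin ℓ) := (Fintype.card_fin ℓ).symm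
    _ ≤ Set.ncard ({v} ∪ {u | EQ3 v u} : Set (Fin 3 → Bool)) := by
        rw [Set.ncard_eq_toFinset_card', ← Finset.card_univ]
        exact Finset.card_le_card_of_injOn f
          (fun i _ => Set.mem_toFinset.2 (hsubN (hf1 i))) (fun i _ j _ => @hinj i j)
    _ ≤ 4 := hN

/-- The 3-dimensional hypercube has writing capacity 4. -/
theorem cap_hypercube3 :
    Cap (fun u v : Fin 3 → Bool => Set.ncard {i | u i ≠ v i} = 1) = 4 := by
  apply le_antisymm
  · exact csSup_le ⟨4, hasValid4⟩ (fun ℓ hℓ => upper hℓ)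
  · exact le_csSup ⟨4, fun ℓ hℓ => upper hℓ⟩ hasValid4
end
end

section
/- The Petersen graph (viewed as a bidirectional graph) has writing capacity C(G) = 3; in particular, although it is 3-regular, it does not admit a valid 4-coloring on any subgraph, but some subgraph admits a valid 3-coloring. -/
noncomputable section

/-! ## Auxiliary material for the Petersen graph -/

abbrev PV := {s : Finset (Fin 5) // s.card = 2}

abbrev PD : PV → PV → Prop := fun a b => Disjoint a.1 b.1

/-- Closed neighborhood (in the full Petersen graph) as a finset. -/
def PW (v : PV) : Finset PV := Finset.univ.filter (fun u => u = v ∨ PD v u)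

lemma pd1 : ∀ v : PV, (PW v).card = 4 := by decide

lemma pd2 : ∀ u : PV, (Finset.univ.filter (fun v : PV => u = v ∨ PD v u)).card = 4 := by decide

lemma pd3 : ∀ v : PV, ¬ PD v v := by decide

lemma pd4 : ∀ v u : PV, v = u ∨ PD v u ∨ ∃ w : PV, PD v w ∧ PD w u := by decide

lemma pdcard : Fintype.card PV = 10 := by decide

lemma petersen_le_four : ∀ ℓ : ℕ, HasValid PD ℓ → ℓ ≤ 4 := by
  rintro ℓ ⟨S, E', c, ⟨⟨v₀, hv₀⟩, hsub⟩, hval⟩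
  classical
  set N : Finset PV := Finset.univ.filter (fun u => u = v₀ ∨ (u ∈ S ∧ E' v₀ u)) with hN
  have hNW : N ⊆ PW v₀ := by
    intro u hu
    simp only [hN, PW, Finset.mem_filter, Finset.mem_univ, true_and] at hu ⊢
    rcases hu with h | ⟨_, hE⟩
    · exact Or.inl h
    · exact Or.inr (hsub v₀ u hE).1
  have himage : Finset.image c N = Finset.univ := by
    apply Finset.eq_univ_of_forall
    intro i
    obtain ⟨u, hu1, hu2, hu3⟩ := hval v₀ hv₀ i
    simp only [Nbr, Set.mem_union, Set.mem_singleton_iff, Set.mem_setOf_eq] at hu1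
    refine Finset.mem_image.2 ⟨u, ?_, hu3⟩
    simp only [hN, Finset.mem_filter, Finset.mem_univ, true_and]
    exact hu1
  have h1 : ℓ ≤ N.card := by
    have := Finset.card_image_le (f := c) (s := N)
    rw [himage] at this
    simpa using this
  have h2 : N.card ≤ 4 := by
    rw [← pd1 v₀]; exact Finset.card_le_card hNW
  omega

lemma petersen_not_four : ¬ HasValid PD 4 := by
  rintro ⟨S, E', c, ⟨⟨v₀, hv₀⟩, hsub⟩, hval⟩
  classical
  have key : ∀ v ∈ S, (∀ u, PD v u → u ∈ S) ∧
      ∀ i : Fin 4, ((PW v).filter (fun u => c u = i)).card = 1 := by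
    intro v hv
    set N : Finset PV := Finset.univ.filter (fun u => u = v ∨ (u ∈ S ∧ E' v u)) with hN
    have hNW : N ⊆ PW v := by
      intro u hu
      simp only [hN, PW, Finset.mem_filter, Finset.mem_univ, true_and] at hu ⊢
      rcases hu with h | ⟨_, hE⟩
      · exact Or.inl h
      · exact Or.inr (hsub v u hE).1
    have hsurj : ∀ i : Fin 4, ∃ u ∈ N, c u = i := by
      intro i
      obtain ⟨u, hu1, hu2, hu3⟩ := hval v hv i
      simp only [Nbr, Set.mem_union, Set.mem_singleton_iff, Set.mem_setOf_eq] at hu1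
      refine ⟨u, ?_, hu3⟩
      simp only [hN, Finset.mem_filter, Finset.mem_univ, true_and]
      exact hu1
    have himage : Finset.image c N = Finset.univ := by
      apply Finset.eq_univ_of_forall
      intro i
      obtain ⟨u, hu, hc⟩ := hsurj i
      exact Finset.mem_image.2 ⟨u, hu, hc⟩
    have h4le : 4 ≤ N.card := by
      have := Finset.card_image_le (f := c) (s := N)
      rw [himage] at this
      simpa using this
    have hNcard : N.card = 4 :=
      le_antisymm (by rw [← pd1 v]; exact Finset.card_le_card hNW) h4le
    have hNeq : N = PW v :=
      Finset.eq_of_subset_of_card_le hNW (by rw [pd1 v, hNcard])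
    have hinj : Set.InjOn c ↑N := by
      rw [← Finset.card_image_iff, himage, hNcard]
      simp
    constructor
    · intro u hDu
      have huN : u ∈ N := by
        rw [hNeq]
        simp only [PW, Finset.mem_filter, Finset.mem_univ, true_and]
        exact Or.inr hDu
      simp only [hN, Finset.mem_filter, Finset.mem_univ, true_and] at huN
      rcases huN with h | ⟨hS, _⟩
      · exact absurd (h ▸ hDu) (pd3 v)
      · exact hS
    · intro i
      rw [← hNeq, Finset.card_eq_one]
      obtain ⟨u, hu, hc⟩ := hsurj i
      refine ⟨u, ?_⟩
      ext x
      simp only [Finset.mem_filter, Finset.mem_singleton]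
      constructor
      · rintro ⟨hx, hcx⟩
        exact hinj (Finset.mem_coe.2 hx) (Finset.mem_coe.2 hu) (hcx.trans hc.symm)
      · rintro rfl
        exact ⟨hu, hc⟩
  have hSall : ∀ v : PV, v ∈ S := by
    intro u
    rcases pd4 v₀ u with rfl | h | ⟨w, h1, h2⟩
    · exact hv₀
    · exact (key v₀ hv₀).1 u h
    · exact (key w ((key v₀ hv₀).1 w h1)).1 u h2
  have hsum1 : ∑ v : PV, ((PW v).filter (fun u => c u = 0)).card = 10 := by
    have h1 : ∀ v : PV, ((PW v).filter (fun u => c u = 0)).card = 1 :=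
      fun v => (key v (hSall v)).2 0
    simp only [h1, Finset.sum_const, Finset.card_univ, pdcard, smul_eq_mul, mul_one]
  have hsum2 : ∑ v : PV, ((PW v).filter (fun u => c u = 0)).card
      = 4 * (Finset.univ.filter (fun u : PV => c u = 0)).card := by
    have hterm : ∀ v : PV, ((PW v).filter (fun u => c u = 0)).card
        = ∑ u : PV, if (u = v ∨ PD v u) ∧ c u = 0 then 1 else 0 := by
      intro v
      rw [PW, Finset.filter_filter, Finset.card_filter]
    simp only [hterm]
    rw [Finset.sum_comm]
    have hinner : ∀ u : PV, (∑ v : PV, if (u = v ∨ PD v u) ∧ c u = 0 then 1 else 0)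
        = if c u = 0 then 4 else 0 := by
      intro u
      by_cases hc : c u = 0
      · simp only [hc, and_true, if_pos]
        rw [← Finset.card_filter]
        exact pd2 u
      · simp [hc]
    simp only [hinner]
    rw [Finset.card_filter, Finset.mul_sum]
    apply Finset.sum_congr rfl
    intro x _
    by_cases h : c x = 0 <;> simp [h]
  rw [hsum1] at hsum2
  omega

/-! ## A valid 3-coloring on a 6-cycle -/

def pa : PV := ⟨{0, 1}, by decide⟩
def pb : PV := ⟨{2, 3}, by decide⟩
def pc : PV := ⟨{0, 4}, by decide⟩
def pd : PV := ⟨{1, 2}, by decide⟩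
def pe : PV := ⟨{0, 3}, by decide⟩
def pf : PV := ⟨{2, 4}, by decide⟩

def pT : Finset PV := {pa, pb, pc, pd, pe, pf}

def pcol : PV → Fin 3 := fun u =>
  if u = pa ∨ u = pd then 0 else if u = pb ∨ u = pe then 1 else 2

lemma pd5 : ∀ v ∈ pT, ∀ i : Fin 3, ∃ u ∈ pT, (u = v ∨ PD v u) ∧ pcol u = i := by decide

lemma petersen_three : HasValid PD 3 := by
  classical
  refine ⟨↑pT, fun x y => x ∈ pT ∧ y ∈ pT ∧ PD x y, pcol, ⟨⟨pa, by simp [pT]⟩, ?_⟩, ?_⟩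
  · rintro u v ⟨hu, hv, hD⟩
    exact ⟨hD, Finset.mem_coe.2 hu, Finset.mem_coe.2 hv⟩
  · intro v hv i
    have hvT : v ∈ pT := Finset.mem_coe.1 hv
    obtain ⟨u, huT, hor, hcol⟩ := pd5 v hvT i
    refine ⟨u, ?_, Finset.mem_coe.2 huT, hcol⟩
    rcases hor with rfl | hD
    · exact Or.inl rfl
    · exact Or.inr ⟨Finset.mem_coe.2 huT, hvT, huT, hD⟩

/-- The Petersen graph (Kneser graph K(5,2), bidirectional) has writing capacity 3:
no subgraph admits a valid 4-coloring, but some subgraph admits a valid 3-coloring. -/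
theorem cap_petersen :
    Cap (fun a b : {s : Finset (Fin 5) // s.card = 2} => Disjoint a.1 b.1) = 3 ∧
    ¬ HasValid (fun a b : {s : Finset (Fin 5) // s.card = 2} => Disjoint a.1 b.1) 4 ∧
    HasValid (fun a b : {s : Finset (Fin 5) // s.card = 2} => Disjoint a.1 b.1) 3 := by
  have h3 : HasValid PD 3 := petersen_three
  have h4 : ¬ HasValid PD 4 := petersen_not_four
  have hle3 : ∀ ℓ ∈ {ℓ : ℕ | HasValid PD ℓ}, ℓ ≤ 3 := by
    intro ℓ hℓ
    have hb := petersen_le_four ℓ hℓ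
    by_contra h
    have : ℓ = 4 := by omega
    exact h4 (this ▸ hℓ)
  refine ⟨le_antisymm (csSup_le ⟨3, h3⟩ hle3) (le_csSup ⟨3, hle3⟩ h3), h4, h3⟩
end
end

section
/- Let G be a bidirectional graph with maximum out-degree Δ_out(G) ≥ 2, maximum-k-core value η(G), and set Δ = 2Δ_out(G), ℓ* = ⌊(1+η(G))/(1 + ln 6 + 3 ln Δ)⌋. If ℓ* ≥ 1, then C(G)/ℓ* ≤ (1+η(G))/ℓ* = O(ln Δ_out(G)); i.e., the LLL-based coloring achieves approximation ratio O(ln Δ_out(G)) for the writing capacity. -/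
noncomputable section

lemma hasValid_le_core {V : Type} [Fintype V] (E : V → V → Prop) (ℓ : ℕ) (h : HasValid E ℓ) :
    ℓ ≤ 1 + eta E := by
  obtain ⟨S, E', c, ⟨hne, hsub⟩, hcol⟩ := h
  rcases Nat.eq_zero_or_pos ℓ with h0 | hpos
  · omega
  have key : ∀ v ∈ S, ℓ ≤ 1 + subOutDeg E' S v := by
    intro v hv
    choose u hu hmem hc using hcol v hv
    have hinj : Function.Injective u := by
      intro i j hij
      have : c (u i) = c (u j) := by rw [hij]
      rw [hc i, hc j] at this
      exact this
    have hrange : Set.range u ⊆ Nbr E' S v := by rintro _ ⟨i, rfl⟩; exact hu i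
    have h1 : (Set.range u).ncard = ℓ := by
      rw [← Set.image_univ, Set.ncard_image_of_injective _ hinj, Set.ncard_univ,
        Nat.card_eq_fintype_card, Fintype.card_fin]
    have h2 : (Nbr E' S v).ncard ≤ 1 + subOutDeg E' S v := by
      unfold Nbr subOutDeg
      refine le_trans (Set.ncard_union_le _ _) ?_
      simp
    calc ℓ = (Set.range u).ncard := h1.symm
      _ ≤ (Nbr E' S v).ncard := Set.ncard_le_ncard hrange (Set.toFinite _)
      _ ≤ _ := h2
  have hle : ℓ - 1 ≤ eta E := by
    apply le_csSup
    · refine ⟨Fintype.card V, ?_⟩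
      rintro k ⟨S', E'', ⟨hne', hsub'⟩, hk⟩
      obtain ⟨v, hv⟩ := hne'
      refine (hk v hv).trans ?_
      refine le_trans (Set.ncard_le_ncard (Set.subset_univ _) Set.finite_univ) ?_
      rw [Set.ncard_univ, Nat.card_eq_fintype_card]
    · exact ⟨S, E', ⟨hne, hsub⟩, fun v hv => by have := key v hv; omega⟩
  omega

lemma cap_le_core {V : Type} [Fintype V] (E : V → V → Prop) : Cap E ≤ 1 + eta E :=
  csSup_le' (fun ℓ hℓ => hasValid_le_core E ℓ hℓ)

lemma lll_numeric (Δ : ℕ) (hΔ : 2 ≤ Δ) (N : ℕ) (ℓstar : ℕ)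
    (hℓ : ℓstar = ⌊(N : ℝ) / (1 + Real.log 6 + 3 * Real.log ((2 * Δ : ℕ) : ℝ))⌋₊)
    (hℓ1 : 1 ≤ ℓstar) :
    (N : ℝ) / ℓstar ≤ 36 * Real.log Δ := by
  have hΔR : (2 : ℝ) ≤ (Δ : ℝ) := by exact_mod_cast hΔ
  have hΔpos : (0 : ℝ) < (Δ : ℝ) := by linarith
  have hcast : ((2 * Δ : ℕ) : ℝ) = 2 * (Δ : ℝ) := by push_cast; ring
  have hlogmul : Real.log ((2 * Δ : ℕ) : ℝ) = Real.log 2 + Real.log (Δ : ℝ) := by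
    rw [hcast, Real.log_mul two_ne_zero (ne_of_gt hΔpos)]
  set D : ℝ := 1 + Real.log 6 + 3 * Real.log ((2 * Δ : ℕ) : ℝ) with hD
  have hlog2 : (0.6 : ℝ) < Real.log 2 := by
    have := Real.log_two_gt_d9; linarith
  have hlog2le : Real.log 2 ≤ 1 := by
    have := Real.log_le_sub_one_of_pos (by norm_num : (0:ℝ) < 2); linarith
  have hlog6 : Real.log 6 ≤ 5 := by
    have := Real.log_le_sub_one_of_pos (by norm_num : (0:ℝ) < 6); linarith
  have hlog6nn : 0 ≤ Real.log 6 := Real.log_nonneg (by norm_num)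
  have hlogΔ : Real.log 2 ≤ Real.log (Δ : ℝ) := Real.log_le_log (by norm_num) hΔR
  have hlogΔpos : (0.6 : ℝ) < Real.log (Δ : ℝ) := lt_of_lt_of_le hlog2 hlogΔ
  have hDpos : (0 : ℝ) < D := by rw [hD, hlogmul]; nlinarith
  have hDle : D ≤ 18 * Real.log (Δ : ℝ) := by
    rw [hD, hlogmul]; nlinarith
  have hx : (N : ℝ) / D < (ℓstar : ℝ) + 1 := by
    rw [hℓ]; exact Nat.lt_floor_add_one _
  have hℓpos : (0 : ℝ) < (ℓstar : ℝ) := by exact_mod_cast hℓ1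
  have hℓ1R : (1 : ℝ) ≤ (ℓstar : ℝ) := by exact_mod_cast hℓ1
  have hN : (N : ℝ) < ((ℓstar : ℝ) + 1) * D :=
    (div_lt_iff₀ hDpos).mp hx
  have : (N : ℝ) ≤ 2 * (ℓstar : ℝ) * D := by nlinarith
  rw [div_le_iff₀ hℓpos]
  calc (N : ℝ) ≤ 2 * (ℓstar : ℝ) * D := this
    _ ≤ 2 * (ℓstar : ℝ) * (18 * Real.log (Δ : ℝ)) := by
        apply mul_le_mul_of_nonneg_left hDle; positivity
    _ = 36 * Real.log (Δ : ℝ) * (ℓstar : ℝ) := by ring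

/-- The LLL-based coloring achieves approximation ratio `O(ln Δ_out(G))` for the writing
capacity of bidirectional graphs. -/
theorem lll_approximation_ratio :
    ∃ K : ℝ, 0 < K ∧
      ∀ (V : Type) [Fintype V] (E : V → V → Prop), Symmetric E → 2 ≤ maxOutDeg E →
        ∀ ℓstar : ℕ,
          ℓstar = ⌊((1 + eta E : ℕ) : ℝ)
              / (1 + Real.log 6 + 3 * Real.log ((2 * maxOutDeg E : ℕ) : ℝ))⌋₊ →
          1 ≤ ℓstar →
          (Cap E : ℝ) / ℓstar ≤ ((1 + eta E : ℕ) : ℝ) / ℓstar ∧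
          ((1 + eta E : ℕ) : ℝ) / ℓstar ≤ K * Real.log (maxOutDeg E) := by
  refine ⟨36, by norm_num, ?_⟩
  intro V _ E _ hΔ ℓstar hℓ hℓ1
  have hℓpos : (0 : ℝ) < (ℓstar : ℝ) := by exact_mod_cast hℓ1
  constructor
  · apply div_le_div_of_nonneg_right ?_ hℓpos.le
    exact_mod_cast cap_le_core E
  · exact lll_numeric (maxOutDeg E) hΔ (1 + eta E) ℓstar hℓ hℓ1
end
end
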